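/- arXiv:1710.05868 — 5 statements merged into one kernel-verified Lean document; each statement's English description precedes it below -/
import Mathlib

section
/- Let k be a field, let D₀ and D₁ be division rings that are finite-dimensional k-algebras with k acting centrally, such that char k divides neither [D₀:k] nor [D₁:k], and let M be a D₀–D₁-bimodule on which k acts centrally and which is finite-dimensional over k. Then the map Hom_{D₁}(M_{D₁}, D₁) → Hom_k(M, k) sending ψ to tr_{D₁/k} ∘ ψ is an isomorphism of D₁–D₀-bimodules, and likewise the map Hom_{D₀}({}_{D₀}M, D₀) → Hom_k(M, k) sending ψ to tr_{D₀/k} ∘ ψ is an isomorphism of D₁–D₀-bimodules. Here tr_{D_i/k}(d) denotes the trace of the k-linear endomorphism of D_i given by left multiplication by d. -/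
section Bimod

/-- The right dual `Hom_S(N_S, S)` of a right `S`-module `N`
(right modules are treated as modules over the opposite ring). -/
abbrev RightDual (S : Type) [Ring S] (N : Type) [AddCommGroup N] [Module Sᵐᵒᵖ N] :
    Type := N →ₗ[Sᵐᵒᵖ] S

/-- The left dual `Hom_R(_R N, R)` of a left `R`-module `N`. -/
abbrev LeftDual (R : Type) [Ring R] (N : Type) [AddCommGroup N] [Module R N] :
    Type := N →ₗ[R] R

variable (R S : Type) [Ring R] [Ring S]
variable (N : Type) [AddCommGroup N] [Module R N] [Module Sᵐᵒᵖ N]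
  [SMulCommClass R Sᵐᵒᵖ N]

namespace RightDual

/-- If `N` is an `R`–`S`-bimodule, the right dual carries a right `R`-action by
precomposition with the left `R`-action: `(ψ • a) x = ψ (a • x)`. -/
instance : Module Rᵐᵒᵖ (RightDual S N) where
  smul a ψ := ψ.comp (DistribMulAction.toLinearMap Sᵐᵒᵖ N a.unop)
  one_smul ψ := by
    apply LinearMap.ext; intro x
    show ψ ((1 : R) • x) = ψ x
    rw [one_smul]
  mul_smul a b ψ := by
    apply LinearMap.ext; intro x
    show ψ ((a * b).unop • x) = ψ (b.unop • a.unop • x)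
    rw [MulOpposite.unop_mul, mul_smul]
  smul_zero a := by apply LinearMap.ext; intro x; rfl
  smul_add a ψ φ := by apply LinearMap.ext; intro x; rfl
  add_smul a b ψ := by
    apply LinearMap.ext; intro x
    show ψ ((a + b).unop • x) = ψ (a.unop • x) + ψ (b.unop • x)
    rw [MulOpposite.unop_add, add_smul, map_add]
  zero_smul ψ := by
    apply LinearMap.ext; intro x
    show ψ ((0 : R) • x) = 0
    rw [zero_smul, map_zero]

@[simp] lemma opSMul_apply (a : Rᵐᵒᵖ) (ψ : RightDual S N) (x : N) :
    (a • ψ) x = ψ (a.unop • x) := rfl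

@[simp] lemma smul_apply' (s : S) (ψ : RightDual S N) (x : N) :
    (s • ψ) x = s * ψ x := rfl

instance : SMulCommClass S Rᵐᵒᵖ (RightDual S N) where
  smul_comm s a ψ := by apply LinearMap.ext; intro x; rfl

end RightDual

namespace LeftDual

/-- If `N` is an `R`–`S`-bimodule, the left dual carries a left `S`-action by
precomposition with the right `S`-action: `(b • ψ) x = ψ (x b)`. -/
noncomputable instance : Module S (LeftDual R N) where
  smul b ψ :=
    haveI : SMulCommClass Sᵐᵒᵖ R N := SMulCommClass.symm R Sᵐᵒᵖ N
    ψ.comp (DistribMulAction.toLinearMap R N (MulOpposite.op b))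
  one_smul ψ := by
    apply LinearMap.ext; intro x
    show ψ ((MulOpposite.op (1:S)) • x) = ψ x
    rw [MulOpposite.op_one, one_smul]
  mul_smul a b ψ := by
    apply LinearMap.ext; intro x
    show ψ ((MulOpposite.op (a*b)) • x) = ψ (MulOpposite.op b • MulOpposite.op a • x)
    rw [MulOpposite.op_mul, mul_smul]
  smul_zero a := by apply LinearMap.ext; intro x; rfl
  smul_add a ψ φ := by apply LinearMap.ext; intro x; rfl
  add_smul a b ψ := by
    apply LinearMap.ext; intro x
    show ψ ((MulOpposite.op (a+b)) • x) = ψ (MulOpposite.op a • x) + ψ (MulOpposite.op b • x)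
    rw [MulOpposite.op_add, add_smul, map_add]
  zero_smul ψ := by
    apply LinearMap.ext; intro x
    show ψ ((MulOpposite.op (0:S)) • x) = 0
    rw [MulOpposite.op_zero, zero_smul, map_zero]

@[simp] lemma sSMul_apply (b : S) (ψ : LeftDual R N) (x : N) :
    (b • ψ) x = ψ (MulOpposite.op b • x) := rfl

instance : SMulCommClass S Rᵐᵒᵖ (LeftDual R N) where
  smul_comm s a ψ := by apply LinearMap.ext; intro x; rfl

end LeftDual

end Bimod

section Statement0

variable (k : Type) [Field k]
variable (D₀ D₁ : Type) [DivisionRing D₀] [DivisionRing D₁]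
variable [Algebra k D₀] [Algebra k D₁]
variable [FiniteDimensional k D₀] [FiniteDimensional k D₁]
variable (M : Type) [AddCommGroup M] [Module D₀ M] [Module D₁ᵐᵒᵖ M]
  [SMulCommClass D₀ D₁ᵐᵒᵖ M]
-- `k` acts centrally on `M`, compatibly with both actions
variable [Module k M] [IsScalarTower k D₀ M] [IsScalarTower k D₁ᵐᵒᵖ M]
variable [FiniteDimensional k M]

/-- The reduced trace `tr_{D/k} : D → k`, sending `d` to the trace of the `k`-linear
endomorphism of `D` given by left multiplication by `d`. -/
noncomputable def trMap (D : Type) [Ring D] [Algebra k D] : D →ₗ[k] k :=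
  (LinearMap.trace k D).comp (LinearMap.mul k D)


section Aux

variable {k : Type} [Field k]

lemma trMap_one' (D : Type) [Ring D] [Algebra k D] [FiniteDimensional k D] :
    trMap k D 1 = Module.finrank k D := by
  show LinearMap.trace k D ((LinearMap.mul k D) 1) = _
  have : (LinearMap.mul k D) 1 = 1 := LinearMap.ext fun x => one_mul x
  rw [this, LinearMap.trace_one]

lemma trMap_comm' (D : Type) [Ring D] [Algebra k D] [FiniteDimensional k D] (a b : D) :
    trMap k D (a * b) = trMap k D (b * a) := by
  show LinearMap.trace k D ((LinearMap.mul k D) (a*b))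
      = LinearMap.trace k D ((LinearMap.mul k D) (b*a))
  have h : ∀ x y : D, (LinearMap.mul k D) (x*y) = (LinearMap.mul k D x) * (LinearMap.mul k D y) :=
    fun x y => LinearMap.ext fun z => mul_assoc x y z
  rw [h, h, LinearMap.trace_mul_comm]

end Aux

/-- Over a field `k`, if `D₀`, `D₁` are division rings that are
finite-dimensional `k`-algebras whose dimensions are not divisible by `char k`,
and `M` is a `D₀`–`D₁`-bimodule, finite-dimensional over the centrally acting `k`,
then `ψ ↦ tr_{D₁/k} ∘ ψ` is an isomorphism of `D₁`–`D₀`-bimodules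
`Hom_{D₁}(M_{D₁}, D₁) → Hom_k(M, k)`, and `ψ ↦ tr_{D₀/k} ∘ ψ` is an isomorphism of
`D₁`–`D₀`-bimodules `Hom_{D₀}({}_{D₀}M, D₀) → Hom_k(M, k)`;  here `Hom_k(M,k)` is a
`D₁`–`D₀`-bimodule via `(b • f • a) x = f (a • x • b)`. -/
theorem statement0
    (hchar₀ : (Module.finrank k D₀ : k) ≠ 0)
    (hchar₁ : (Module.finrank k D₁ : k) ≠ 0)
    (T : RightDual D₁ M → (M →ₗ[k] k))
    (hT : ∀ ψ : RightDual D₁ M, ∀ x : M, T ψ x = trMap k D₁ (ψ x))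
    (T' : LeftDual D₀ M → (M →ₗ[k] k))
    (hT' : ∀ ψ : LeftDual D₀ M, ∀ x : M, T' ψ x = trMap k D₀ (ψ x)) :
    -- `T` is a bijection, i.e. an isomorphism onto `Hom_k(M,k)`, ...
    Function.Bijective T ∧
    -- ... which is left `D₁`-equivariant: `T (b • ψ) = b • (T ψ)` where
    -- `(b • f) x = f (x b)`, ...
    (∀ (b : D₁) (ψ : RightDual D₁ M) (x : M),
      T (b • ψ) x = T ψ (MulOpposite.op b • x)) ∧
    -- ... and right `D₀`-equivariant: `T (ψ • a) = (T ψ) • a` where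
    -- `(f • a) x = f (a • x)`;
    (∀ (a : D₀ᵐᵒᵖ) (ψ : RightDual D₁ M) (x : M),
      T (a • ψ) x = T ψ (a.unop • x)) ∧
    -- likewise `T'` is a bijection ...
    Function.Bijective T' ∧
    -- ... which is left `D₁`-equivariant ...
    (∀ (b : D₁) (ψ : LeftDual D₀ M) (x : M),
      T' (b • ψ) x = T' ψ (MulOpposite.op b • x)) ∧
    -- ... and right `D₀`-equivariant.
    (∀ (a : D₀ᵐᵒᵖ) (ψ : LeftDual D₀ M) (x : M),
      T' (a • ψ) x = T' ψ (a.unop • x)) := by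
  classical
  haveI : Module.Finite D₁ᵐᵒᵖ M := Module.Finite.of_restrictScalars_finite k D₁ᵐᵒᵖ M
  haveI : Module.Finite D₀ M := Module.Finite.of_restrictScalars_finite k D₀ M
  -- k-linearity of elements of the duals
  have hψk : ∀ (ψ : RightDual D₁ M) (c : k) (x : M), ψ (c • x) = c • ψ x := by
    intro ψ c x
    rw [← algebraMap_smul D₁ᵐᵒᵖ c x, map_smul]
    show ψ x * (algebraMap k D₁ᵐᵒᵖ c).unop = c • ψ x
    rw [MulOpposite.algebraMap_apply, MulOpposite.unop_op, ← Algebra.commutes, ← Algebra.smul_def]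
  have hφk : ∀ (ψ : LeftDual D₀ M) (c : k) (x : M), ψ (c • x) = c • ψ x := by
    intro ψ c x
    rw [← algebraMap_smul D₀ c x, map_smul, algebraMap_smul]
  -- the k-linear versions of T and T'
  let L : RightDual D₁ M →ₗ[k] (M →ₗ[k] k) :=
    { toFun := fun ψ =>
        { toFun := fun x => trMap k D₁ (ψ x)
          map_add' := fun x y => by
            show trMap k D₁ (ψ (x + y)) = trMap k D₁ (ψ x) + trMap k D₁ (ψ y)
            rw [map_add, map_add]
          map_smul' := fun c x => by
            show trMap k D₁ (ψ (c • x)) = (RingHom.id k) c • trMap k D₁ (ψ x)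
            rw [hψk, map_smul]; rfl }
      map_add' := fun ψ φ => LinearMap.ext fun x => by
        show trMap k D₁ ((ψ + φ) x) = trMap k D₁ (ψ x) + trMap k D₁ (φ x)
        rw [LinearMap.add_apply, map_add]
      map_smul' := fun c ψ => LinearMap.ext fun x => by
        show trMap k D₁ ((c • ψ) x) = c • trMap k D₁ (ψ x)
        rw [LinearMap.smul_apply, map_smul] }
  let L' : LeftDual D₀ M →ₗ[k] (M →ₗ[k] k) :=
    { toFun := fun ψ =>
        { toFun := fun x => trMap k D₀ (ψ x)
          map_add' := fun x y => by
            show trMap k D₀ (ψ (x + y)) = trMap k D₀ (ψ x) + trMap k D₀ (ψ y)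
            rw [map_add, map_add]
          map_smul' := fun c x => by
            show trMap k D₀ (ψ (c • x)) = (RingHom.id k) c • trMap k D₀ (ψ x)
            rw [hφk, map_smul]; rfl }
      map_add' := fun ψ φ => LinearMap.ext fun x => by
        show trMap k D₀ ((ψ + φ) x) = trMap k D₀ (ψ x) + trMap k D₀ (φ x)
        rw [LinearMap.add_apply, map_add]
      map_smul' := fun c ψ => LinearMap.ext fun x => by
        show trMap k D₀ ((c • ψ) x) = c • trMap k D₀ (ψ x)
        rw [LinearMap.smul_apply, map_smul] }
  have hTL : ∀ ψ, T ψ = L ψ := fun ψ => LinearMap.ext fun x => by rw [hT]; rfl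
  have hTL' : ∀ ψ, T' ψ = L' ψ := fun ψ => LinearMap.ext fun x => by rw [hT']; rfl
  -- injectivity
  have hinj : Function.Injective L := by
    refine (injective_iff_map_eq_zero L).mpr ?_
    intro ψ h
    apply LinearMap.ext; intro x
    simp only [LinearMap.zero_apply]
    by_contra hx
    have h0 : (L ψ) ((MulOpposite.op (ψ x)⁻¹) • x) = 0 := by rw [h]; rfl
    have h1 : trMap k D₁ (ψ ((MulOpposite.op (ψ x)⁻¹) • x)) = 0 := h0
    rw [ψ.map_smul] at h1
    have h2 : (MulOpposite.op (ψ x)⁻¹ : D₁ᵐᵒᵖ) • ψ x = 1 := by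
      show ψ x * (MulOpposite.op (ψ x)⁻¹).unop = 1
      rw [MulOpposite.unop_op, mul_inv_cancel₀ hx]
    rw [h2, trMap_one'] at h1
    exact hchar₁ h1
  have hinj' : Function.Injective L' := by
    refine (injective_iff_map_eq_zero L').mpr ?_
    intro ψ h
    apply LinearMap.ext; intro x
    simp only [LinearMap.zero_apply]
    by_contra hx
    have h0 : (L' ψ) (((ψ x)⁻¹ : D₀) • x) = 0 := by rw [h]; rfl
    have h1 : trMap k D₀ (ψ (((ψ x)⁻¹ : D₀) • x)) = 0 := h0
    rw [ψ.map_smul, smul_eq_mul, inv_mul_cancel₀ hx, trMap_one'] at h1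
    exact hchar₀ h1
  -- dimension count
  have hdim : Module.finrank k (RightDual D₁ M) = Module.finrank k (M →ₗ[k] k) := by
    rw [Module.finrank_linearMap, Module.finrank_linearMap_self,
      ← Module.finrank_mul_finrank k D₁ᵐᵒᵖ M,
      (MulOpposite.opLinearEquiv k : D₁ ≃ₗ[k] D₁ᵐᵒᵖ).finrank_eq]
    exact mul_comm _ _
  have hdim' : Module.finrank k (LeftDual D₀ M) = Module.finrank k (M →ₗ[k] k) := by
    rw [Module.finrank_linearMap, Module.finrank_linearMap_self,
      ← Module.finrank_mul_finrank k D₀ M]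
    exact mul_comm _ _
  have hsurj : Function.Surjective L :=
    (LinearMap.injective_iff_surjective_of_finrank_eq_finrank hdim).mp hinj
  have hsurj' : Function.Surjective L' :=
    (LinearMap.injective_iff_surjective_of_finrank_eq_finrank hdim').mp hinj'
  have hTfun : T = ⇑L := funext hTL
  have hTfun' : T' = ⇑L' := funext hTL'
  refine ⟨by rw [hTfun]; exact ⟨hinj, hsurj⟩, ?_, ?_, by rw [hTfun']; exact ⟨hinj', hsurj'⟩, ?_, ?_⟩
  · intro b ψ x
    rw [hT, hT, ψ.map_smul]
    show trMap k D₁ (b * ψ x) = trMap k D₁ (ψ x * b)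
    exact trMap_comm' D₁ b (ψ x)
  · intro a ψ x
    rw [hT, hT]
    rfl
  · intro b ψ x
    rw [hT', hT']
    rfl
  · intro a ψ x
    rw [hT', hT', LinearMap.smul_apply, ψ.map_smul]
    show trMap k D₀ (ψ x * a.unop) = trMap k D₀ (a.unop * ψ x)
    exact trMap_comm' D₀ (ψ x) a.unop


end Statement0
end

section
/- Let D₀ be a division ring and D₁ a commutative subring of D₀ (hence a field) such that D₀ has dimension m < ∞ as a right D₁-vector space and the characteristic of D₁ does not divide m. Then the D₀–D₁-bimodule M = D₀ (with left action by multiplication in D₀ and right action by multiplication by elements of D₁) has symmetric duals. -/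
section SymDual

variable (D₀ D₁ : Type) [DivisionRing D₀] [DivisionRing D₁]
variable (M : Type) [AddCommGroup M] [Module D₀ M] [Module D₁ᵐᵒᵖ M]
  [SMulCommClass D₀ D₁ᵐᵒᵖ M]

/-- A `D₀`–`D₁`-bimodule `M` *has symmetric duals* if `M` and `M*` are
finite-dimensional on the left and the right and there is a bimodule isomorphism
`M ≅ M**` (a left `D₀`-linear equivalence commuting with the right `D₁`-actions). -/
def HasSymmetricDuals : Prop :=
  Module.Finite D₀ M ∧ Module.Finite D₁ᵐᵒᵖ M ∧
  Module.Finite D₁ (RightDual D₁ M) ∧ Module.Finite D₀ᵐᵒᵖ (RightDual D₁ M) ∧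
  ∃ e : M ≃ₗ[D₀] RightDual D₀ (RightDual D₁ M),
    ∀ (b : D₁ᵐᵒᵖ) (x : M), e (b • x) = b • e x

end SymDual

section SelfDuality

open MulOpposite Module

theorem Module.Dual.span_range_eq_top_of_separating {K V ι : Type*} [Field K] [AddCommGroup V]
    [Module K V] [FiniteDimensional K V] (Θ : ι → Dual K V)
    (hΘ : ∀ x, (∀ i, Θ i x = 0) → x = 0) : Submodule.span K (Set.range Θ) = ⊤ := by
  have : (Submodule.span K (Set.range Θ)).dualCoannihilator = ⊥ := by
    rw [eq_bot_iff]
    intro x hx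
    rw [← SetLike.mem_coe, Submodule.coe_dualCoannihilator_span] at hx
    exact hΘ x fun i => hx _ ⟨i, rfl⟩
  rw [← Subspace.dualCoannihilator_dualAnnihilator_eq (W := Submodule.span K (Set.range Θ)), this,
    Submodule.dualAnnihilator_bot]

variable {K D : Type} [Field K] [DivisionRing D] [Module Kᵐᵒᵖ D] [SMulCommClass D Kᵐᵒᵖ D]
  {f : K →+* D}

theorem exists_balanced_dual [FiniteDimensional Kᵐᵒᵖ D]
    (hf : ∀ (b : K) (x : D), op b • x = x * f b) (hm : (finrank Kᵐᵒᵖ D : K) ≠ 0) :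
    ∃ φ : Dual Kᵐᵒᵖ D, φ 1 ≠ 0 ∧ ∀ b x, φ (f b * x) = op b * φ x := by
  let L := Module.toModuleEnd Kᵐᵒᵖ (S := D) D
  let ad : K → End Kᵐᵒᵖ D := fun b => L (f b) - op b • 1
  have had : ∀ b x, ad b x = f b * x - x * f b := fun b x => by
    rw [← hf]; rfl
  let W := ⨆ b, LinearMap.range (ad b)
  have htrace : ∀ y ∈ W, LinearMap.trace Kᵐᵒᵖ D (L y) = 0 := fun y hy =>
    Submodule.iSup_induction _ (motive := fun y => LinearMap.trace Kᵐᵒᵖ D (L y) = 0) hy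
      (fun b _ ⟨x, hx⟩ => by
        rw [← hx, had, map_sub, map_mul, map_mul, map_sub, LinearMap.trace_mul_comm, sub_self])
      (by rw [map_zero, map_zero])
      (fun y z hy hz => by rw [map_add, map_add, hy, hz, add_zero])
  have h1 : (1 : D) ∉ W := fun h => hm <| by
    have := htrace 1 h
    rwa [map_one, LinearMap.trace_one, ← op_natCast, op_eq_zero_iff] at this
  obtain ⟨φ, hφ1, hφW⟩ := W.exists_dual_map_eq_bot_of_notMem h1 inferInstance
  refine ⟨φ, hφ1, fun b x => ?_⟩
  have hφad : φ (ad b x) = 0 := (Submodule.mem_bot _).1 <|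
    hφW ▸ Submodule.mem_map_of_mem (Submodule.mem_iSup_of_mem b (LinearMap.mem_range_self _ x))
  rw [had, map_sub, sub_eq_zero] at hφad
  rw [hφad, ← hf, map_smul, smul_eq_mul]

theorem bijective_dual_comp_toModuleEnd [FiniteDimensional Kᵐᵒᵖ D] {φ : Dual Kᵐᵒᵖ D}
    (hφ : φ ≠ 0) (hbal : ∀ b x, φ (f b * x) = op b * φ x) :
    Function.Bijective fun a : D => φ ∘ₗ toModuleEnd Kᵐᵒᵖ D a := by
  let Θ := fun a : D => φ ∘ₗ toModuleEnd Kᵐᵒᵖ D a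
  have hΘ : ∀ a x, Θ a x = φ (a * x) := fun _ _ => rfl
  obtain ⟨y, hy⟩ : ∃ y, φ y ≠ 0 := DFunLike.ne_iff.1 hφ
  refine ⟨fun a a' h => ?_, fun ψ => ?_⟩
  · by_contra hne
    apply hy
    have := LinearMap.congr_fun h ((a - a')⁻¹ * y)
    rwa [hΘ, hΘ, ← sub_eq_zero, ← map_sub, ← sub_mul, ← mul_assoc,
      mul_inv_cancel₀ (sub_ne_zero.2 hne), one_mul] at this
  · have hsep : ∀ x, (∀ a, Θ a x = 0) → x = 0 := fun x hx => by
      by_contra hx0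
      exact hy (by simpa [hΘ, mul_assoc, inv_mul_cancel₀ hx0] using hx (y * x⁻¹))
    have hψ : ψ ∈ Submodule.span Kᵐᵒᵖ (Set.range Θ) :=
      (Module.Dual.span_range_eq_top_of_separating Θ hsep).symm ▸ Submodule.mem_top
    induction hψ using Submodule.span_induction with
    | mem _ h => exact h
    | zero => exact ⟨0, by ext; simp⟩
    | add _ _ _ _ h h' =>
      obtain ⟨a, rfl⟩ := h
      obtain ⟨a', rfl⟩ := h'
      exact ⟨a + a', by ext; simp [add_mul]⟩
    | smul c _ _ h =>
      obtain ⟨a, rfl⟩ := h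
      exact ⟨f c.unop * a, by ext; simp [mul_assoc, hbal]⟩

theorem hasSymmetricDuals_self [FiniteDimensional Kᵐᵒᵖ D]
    (hf : ∀ (b : K) (x : D), op b • x = x * f b) (hm : (finrank Kᵐᵒᵖ D : K) ≠ 0) :
    HasSymmetricDuals D K D := by
  obtain ⟨φ, hφ1, hbal⟩ := exists_balanced_dual hf hm
  let u := (opLinearEquiv Kᵐᵒᵖ (M := K)).symm
  let ψ₀ : RightDual K D := u.toLinearMap ∘ₗ φ
  -- `r • ψ₀` is `x ↦ unop (φ (unop r * x))`, i.e. `ψ₀` composed with the map of the previous lemma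
  have hbij : Function.Bijective (LinearMap.toSpanSingleton Dᵐᵒᵖ _ ψ₀) :=
    (LinearEquiv.congrRight u).bijective.comp <|
      (bijective_dual_comp_toModuleEnd (ne_of_apply_ne (· 1) hφ1) hbal).comp
        (opLinearEquiv ℕ (M := D)).symm.bijective
  let Φ := LinearEquiv.ofBijective _ hbij
  have hΦ : ∀ (b : K) (a : D), Φ (op (f b * a)) = b • Φ (op a) := fun b a => by
    ext x
    show unop (φ (f b * a * x)) = b * unop (φ (a * x))
    rw [mul_assoc, hbal, unop_mul, unop_op, mul_comm]
  let e := (LinearMap.ringLmapEquivSelf Dᵐᵒᵖ D D).symm ≪≫ₗ LinearEquiv.congrLeft D D Φ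
  have he : ∀ x a, e x (Φ a) = x * unop a := fun x a => by simp [e]
  refine ⟨inferInstance, inferInstance, inferInstance, Module.Finite.equiv Φ, e, fun b x => ?_⟩
  ext ψ
  obtain ⟨a, rfl⟩ := Φ.surjective.comp op_surjective ψ
  obtain ⟨c, rfl⟩ := op_surjective b
  rw [RightDual.opSMul_apply, Function.comp_apply, ← hΦ, he, he, hf]
  simp only [unop_op, mul_assoc]

end SelfDuality

section Statement2

variable (D₀ D₁ : Type) [DivisionRing D₀] [Field D₁]

/-- The right `D₁`-module structure on `D₀` obtained from a ring embedding
`f : D₁ → D₀` exhibiting `D₁` as a (commutative) subring of `D₀`: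
`x • b := x * f b`. -/
noncomputable def rightModViaEmbedding (f : D₁ →+* D₀) : Module D₁ᵐᵒᵖ D₀ :=
  Module.compHom D₀ (RingHom.op f)

theorem statement2 (f : D₁ →+* D₀) (m : ℕ)
    (hfin : letI := rightModViaEmbedding D₀ D₁ f; Module.Finite D₁ᵐᵒᵖ D₀)
    (hdim : letI := rightModViaEmbedding D₀ D₁ f; Module.finrank D₁ᵐᵒᵖ D₀ = m)
    (hchar : (m : D₁) ≠ 0) :
    letI : Module D₁ᵐᵒᵖ D₀ := rightModViaEmbedding D₀ D₁ f
    letI : SMulCommClass D₀ D₁ᵐᵒᵖ D₀ :=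
      ⟨fun a b x => (mul_assoc a x (f b.unop)).symm⟩
    HasSymmetricDuals D₀ D₁ D₀ := by
  let : Module D₁ᵐᵒᵖ D₀ := rightModViaEmbedding D₀ D₁ f
  let : SMulCommClass D₀ D₁ᵐᵒᵖ D₀ := ⟨fun a b x => (mul_assoc a x (f b.unop)).symm⟩
  have : Module.Finite D₁ᵐᵒᵖ D₀ := hfin
  exact hasSymmetricDuals_self (f := f) (fun _ _ => rfl) (hdim ▸ hchar)

end Statement2
end

section
/- Let k be a field, let D₀ and D₁ be fields containing k, and let M be a D₀–D₁-bimodule on which k acts centrally that is simple as a bimodule and has left-right dimension (m, n), where the characteristic of k divides neither m nor n. Then M has symmetric duals. -/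
/-! The ring `B` of bimodule endomorphisms of `M` contains both scalar actions, since `D₀` and
`D₁` are commutative. By simplicity every nonzero element of `B` is bijective, so `b ↦ b m₀`
identifies `B` with `M` for any `m₀ ≠ 0`. For a nonzero `ψ₀ ∈ M*` the map `x ↦ ψ₀ ∘ b_x`, where
`b_x m₀ = x`, is then an injective map `M → M*` exchanging the two actions, and it is bijective
because `M*` and `M` have the same dimension over `D₁`. Hence `M*` is again a simple bimodule,
and composing with the same map for `M*` gives `M ≅ M**`. -/

open MulOpposite Module

section SimpleBimodule

variable {D₀ D₁ M : Type} [Ring D₀] [Ring D₁] [AddCommGroup M] [Module D₀ M] [Module D₁ᵐᵒᵖ M]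

variable (D₀ D₁ M) in
def IsSimpleBimodule : Prop :=
  ∀ p : Submodule D₀ M, (∀ (b : D₁ᵐᵒᵖ) (x : M), x ∈ p → b • x ∈ p) → p = ⊥ ∨ p = ⊤

theorem IsSimpleBimodule.eq_bot_or_eq_top (h : IsSimpleBimodule D₀ D₁ M)
    (p : Submodule D₁ᵐᵒᵖ M) (hp : ∀ (a : D₀) (x : M), x ∈ p → a • x ∈ p) : p = ⊥ ∨ p = ⊤ := by
  let q : Submodule D₀ M := { p.toAddSubmonoid with smul_mem' := hp }
  refine (h q fun s x hx => p.smul_mem s hx).imp (fun hq => ?_) (fun hq => ?_)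
  · exact eq_bot_iff.2 fun x hx => (Submodule.mem_bot _).2 ((Submodule.mem_bot D₀).1 (hq ▸ hx))
  · exact eq_top_iff.2 fun x _ => (hq ▸ Submodule.mem_top : x ∈ q)

theorem IsSimpleBimodule.of_addEquiv {N : Type} [AddCommGroup N] [Module D₁ N] [Module D₀ᵐᵒᵖ N]
    (h : IsSimpleBimodule D₀ D₁ M) (f : M ≃+ N) (h₀ : ∀ (a : D₀) (x : M), f (a • x) = op a • f x)
    (h₁ : ∀ (s : D₁ᵐᵒᵖ) (x : M), f (s • x) = s.unop • f x) : IsSimpleBimodule D₁ D₀ N := by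
  intro p hp
  let q : Submodule D₁ᵐᵒᵖ M :=
    { carrier := f ⁻¹' p
      add_mem' := fun hx hy => by simpa using p.add_mem hx hy
      zero_mem' := by simp
      smul_mem' := fun s x hx => by simpa [h₁] using p.smul_mem s.unop hx }
  have hq : ∀ y, f.symm y ∈ q ↔ y ∈ p := fun y => by simp [q]
  refine (h.eq_bot_or_eq_top q fun a x hx => ?_).imp (fun hbot => ?_) fun htop => ?_
  · simpa [q, h₀] using hp (op a) _ hx
  · exact eq_bot_iff.2 fun y hy => by simpa [hbot] using (hq y).2 hy
  · exact eq_top_iff.2 fun y _ => (hq y).1 (by simp [htop])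

variable [SMulCommClass D₀ D₁ᵐᵒᵖ M]

variable (D₀ D₁ M) in
def bimoduleEnd : Subring (Module.End D₁ᵐᵒᵖ M) :=
  Subring.centralizer (Set.range (toModuleEnd D₁ᵐᵒᵖ (S := D₀) M))

theorem map_smul_of_mem_bimoduleEnd {b : Module.End D₁ᵐᵒᵖ M} (hb : b ∈ bimoduleEnd D₀ D₁ M)
    (a : D₀) (x : M) : b (a • x) = a • b x :=
  (LinearMap.congr_fun (Subring.mem_centralizer_iff.1 hb _ ⟨a, rfl⟩) x).symm

theorem IsSimpleBimodule.bijective_of_mem_bimoduleEnd (h : IsSimpleBimodule D₀ D₁ M)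
    {b : Module.End D₁ᵐᵒᵖ M} (hb : b ∈ bimoduleEnd D₀ D₁ M) (hb0 : b ≠ 0) :
    Function.Bijective b := by
  constructor
  · refine (h.eq_bot_or_eq_top (LinearMap.ker b) fun a x hx => ?_).elim LinearMap.ker_eq_bot.1
      fun hk => absurd (LinearMap.ker_eq_top.1 hk) hb0
    rw [LinearMap.mem_ker, map_smul_of_mem_bimoduleEnd hb, LinearMap.mem_ker.1 hx, smul_zero]
  · refine (h.eq_bot_or_eq_top (LinearMap.range b) ?_).elim
      (fun hr => absurd (LinearMap.range_eq_bot.1 hr) hb0) LinearMap.range_eq_top.1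
    rintro a _ ⟨y, rfl⟩
    exact ⟨a • y, map_smul_of_mem_bimoduleEnd hb a y⟩

end SimpleBimodule

section CommRing

variable {D₀ D₁ M : Type} [CommRing D₀] [CommRing D₁] [AddCommGroup M] [Module D₀ M]
  [Module D₁ᵐᵒᵖ M] [SMulCommClass D₀ D₁ᵐᵒᵖ M]

theorem toModuleEnd_mem_bimoduleEnd (a : D₀) :
    toModuleEnd D₁ᵐᵒᵖ M a ∈ bimoduleEnd D₀ D₁ M := by
  rw [bimoduleEnd, Subring.mem_centralizer_iff]
  rintro _ ⟨a', rfl⟩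
  ext x
  simp [smul_smul, mul_comm]

theorem algebraMap_mem_bimoduleEnd (s : D₁ᵐᵒᵖ) :
    algebraMap D₁ᵐᵒᵖ (Module.End D₁ᵐᵒᵖ M) s ∈ bimoduleEnd D₀ D₁ M := by
  rw [bimoduleEnd, Subring.mem_centralizer_iff]
  rintro _ ⟨a, rfl⟩
  ext x
  simp

theorem IsSimpleBimodule.bijective_toSpanSingleton (h : IsSimpleBimodule D₀ D₁ M) {m₀ : M}
    (hm₀ : m₀ ≠ 0) : Function.Bijective (LinearMap.toSpanSingleton (bimoduleEnd D₀ D₁ M) M m₀) := by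
  constructor
  · refine (injective_iff_map_eq_zero _).2 fun b hb => ?_
    by_contra hb0
    have hbij := h.bijective_of_mem_bimoduleEnd b.2 (by simpa using hb0)
    exact hm₀ (hbij.1 (hb.trans (map_zero _).symm))
  · let p : Submodule D₁ᵐᵒᵖ M :=
      { carrier := Set.range (LinearMap.toSpanSingleton (bimoduleEnd D₀ D₁ M) M m₀)
        add_mem' := by rintro _ _ ⟨b, rfl⟩ ⟨c, rfl⟩; exact ⟨b + c, map_add _ b c⟩
        zero_mem' := ⟨0, map_zero _⟩
        smul_mem' := by
          rintro s _ ⟨b, rfl⟩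
          exact ⟨⟨_, algebraMap_mem_bimoduleEnd s⟩ * b, rfl⟩ }
    refine (h.eq_bot_or_eq_top p ?_).elim (fun hp => ?_) fun hp x => ?_
    · rintro a _ ⟨b, rfl⟩
      exact ⟨⟨_, toModuleEnd_mem_bimoduleEnd a⟩ * b, rfl⟩
    · have hm₀p : m₀ ∈ p := ⟨1, one_smul _ m₀⟩
      exact absurd ((Submodule.mem_bot _).1 (hp ▸ hm₀p)) hm₀
    · exact (hp ▸ Submodule.mem_top : x ∈ p)

end CommRing

instance Module.Finite.self_op {R : Type*} [Semiring R] : Module.Finite Rᵐᵒᵖ R :=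
  .equiv (opLinearEquiv Rᵐᵒᵖ).symm

section Field

variable {D₀ D₁ M : Type} [Field D₀] [Field D₁] [AddCommGroup M] [Module D₀ M] [Module D₁ᵐᵒᵖ M]
  [SMulCommClass D₀ D₁ᵐᵒᵖ M]

variable (D₁ M) in
theorem finrank_rightDual [Module.Finite D₁ᵐᵒᵖ M] :
    finrank D₁ᵐᵒᵖ (RightDual D₁ M) = finrank D₁ᵐᵒᵖ M := by
  rw [finrank_linearMap, (opLinearEquiv D₁ᵐᵒᵖ : D₁ ≃ₗ[D₁ᵐᵒᵖ] D₁ᵐᵒᵖ).finrank_eq, finrank_self,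
    mul_one]

theorem IsSimpleBimodule.exists_addEquiv_rightDual (h : IsSimpleBimodule D₀ D₁ M) [Nontrivial M]
    [Module.Finite D₁ᵐᵒᵖ M] :
    ∃ f : M ≃+ RightDual D₁ M, (∀ (a : D₀) (x : M), f (a • x) = op a • f x) ∧
      ∀ (s : D₁ᵐᵒᵖ) (x : M), f (s • x) = s.unop • f x := by
  obtain ⟨m₀, hm₀⟩ := exists_ne (0 : M)
  have : Nontrivial (RightDual D₁ M) :=
    finrank_pos_iff.1 ((finrank_rightDual D₁ M).symm ▸ finrank_pos)
  obtain ⟨ψ₀, hψ₀⟩ := exists_ne (0 : RightDual D₁ M)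
  let o := LinearEquiv.ofBijective _ (h.bijective_toSpanSingleton hm₀)
  let F : M →ₗ[D₁ᵐᵒᵖ] RightDual D₁ M :=
    { toFun := fun x => ψ₀ ∘ₗ (o.symm x : Module.End D₁ᵐᵒᵖ M)
      map_add' := fun x y => by simp [LinearMap.comp_add]
      map_smul' := fun s x => by
        change ψ₀ ∘ₗ (o.symm ((⟨_, algebraMap_mem_bimoduleEnd s⟩ : bimoduleEnd D₀ D₁ M) • x) :
          Module.End D₁ᵐᵒᵖ M) = _
        ext y
        simp [map_smul] }
  have hF₀ (a : D₀) (x : M) : F (a • x) = op a • F x := by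
    change ψ₀ ∘ₗ (o.symm ((⟨_, toModuleEnd_mem_bimoduleEnd a⟩ : bimoduleEnd D₀ D₁ M) • x) :
      Module.End D₁ᵐᵒᵖ M) = _
    ext y
    simp [F, map_smul_of_mem_bimoduleEnd (o.symm x).2]
  have hFinj : Function.Injective F := by
    refine (injective_iff_map_eq_zero F).2 fun x hx => ?_
    have hb : o.symm x = 0 := by
      by_contra hb0
      have hsurj := (h.bijective_of_mem_bimoduleEnd (o.symm x).2 (by simpa using hb0)).2
      exact hψ₀ (LinearMap.ext fun y => by
        obtain ⟨z, rfl⟩ := hsurj y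
        exact LinearMap.congr_fun hx z)
    simpa using congrArg o hb
  have hFsurj := (LinearMap.injective_iff_surjective_of_finrank_eq_finrank
    (finrank_rightDual D₁ M).symm).1 hFinj
  exact ⟨AddEquiv.ofBijective F ⟨hFinj, hFsurj⟩, hF₀, fun s x => by
    ext y
    change F (s • x) y = unop s * F x y
    rw [F.map_smul, LinearMap.smul_apply, smul_eq_mul_unop, mul_comm]⟩

end Field

section Statement3

variable (k : Type) [Field k]
variable (D₀ D₁ : Type) [Field D₀] [Field D₁]
variable [Algebra k D₀] [Algebra k D₁]
variable (M : Type) [AddCommGroup M] [Module D₀ M] [Module D₁ᵐᵒᵖ M]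
  [SMulCommClass D₀ D₁ᵐᵒᵖ M]
-- `k` acts centrally on `M`:
variable [Module k M] [IsScalarTower k D₀ M] [IsScalarTower k D₁ᵐᵒᵖ M]

theorem statement3
    -- `M` is nonzero and has no proper nonzero sub-bimodules:
    (hnontriv : Nontrivial M)
    (hsimple : ∀ p : Submodule D₀ M,
      (∀ (b : D₁ᵐᵒᵖ) (x : M), x ∈ p → b • x ∈ p) → p = ⊥ ∨ p = ⊤)
    [Module.Finite D₀ M] [Module.Finite D₁ᵐᵒᵖ M] :
    HasSymmetricDuals D₀ D₁ M := by
  have hM : IsSimpleBimodule D₀ D₁ M := hsimple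
  obtain ⟨f, hf₀, hf₁⟩ := hM.exists_addEquiv_rightDual
  have : Nontrivial (RightDual D₁ M) := f.symm.surjective.nontrivial
  have : Module.Finite D₀ᵐᵒᵖ (RightDual D₁ M) :=
    .of_surjective (σ := (RingEquiv.toOpposite D₀ : D₀ →+* D₀ᵐᵒᵖ))
      { toFun := f, map_add' := f.map_add, map_smul' := hf₀ } f.surjective
  obtain ⟨g, hg₀, hg₁⟩ := (hM.of_addEquiv f hf₀ hf₁).exists_addEquiv_rightDual
  refine ⟨inferInstance, inferInstance, inferInstance, inferInstance,
    { f.trans g with map_smul' := fun a x => ?_ }, fun s x => ?_⟩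
  · simp [hf₀, hg₁]
  · simp [hf₁, hg₀]

end Statement3
end

section
/- Let D₀, D₁ be division rings and M a D₀–D₁-bimodule that is finite-dimensional on both the left and the right. Then the right A_M-module (M* D₁), with underlying groups (M* D₁)e₀ = M* = Hom_{D₁}(M_{D₁}, D₁) and (M* D₁)e₁ = D₁, and with right action (δ, b)·(α, m; 0, β) = (δα, δ(m) + bβ), is an injective right A_M-module. -/
set_option linter.unusedSectionVars false

section Species

variable (D₀ D₁ : Type) [DivisionRing D₀] [DivisionRing D₁]
variable (M : Type) [AddCommGroup M] [Module D₀ M] [Module D₁ᵐᵒᵖ M]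
  [SMulCommClass D₀ D₁ᵐᵒᵖ M]

/-- Ringel's bimodule species: the triangular matrix ring
`A_M = (D₀, M; 0, D₁)`, realized on the carrier `D₀ × M × D₁`. -/
abbrev Species : Type := D₀ × M × D₁

namespace Species

/-- Matrix-style multiplication on the triangular matrix ring. -/
instance : Ring (Species D₀ D₁ M) where
  __ := (inferInstance : AddCommGroup (D₀ × M × D₁))
  mul x y := (x.1 * y.1, x.1 • y.2.1 + MulOpposite.op y.2.2 • x.2.1, x.2.2 * y.2.2)
  one := (1, 0, 1)
  mul_assoc x y z := by
    refine Prod.ext (mul_assoc _ _ _) (Prod.ext ?_ (mul_assoc _ _ _))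
    show (x.1 * y.1) • z.2.1 + MulOpposite.op z.2.2 • (x.1 • y.2.1 + MulOpposite.op y.2.2 • x.2.1)
        = x.1 • (y.1 • z.2.1 + MulOpposite.op z.2.2 • y.2.1) +
            MulOpposite.op (y.2.2 * z.2.2) • x.2.1
    haveI : SMulCommClass D₁ᵐᵒᵖ D₀ M := SMulCommClass.symm _ _ _
    rw [MulOpposite.op_mul, smul_add, smul_add, mul_smul, mul_smul]
    rw [smul_comm (MulOpposite.op z.2.2) x.1 y.2.1]
    abel
  one_mul x := by
    refine Prod.ext (one_mul _) (Prod.ext ?_ (one_mul _))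
    show (1 : D₀) • x.2.1 + MulOpposite.op x.2.2 • (0 : M) = x.2.1
    rw [one_smul, smul_zero, add_zero]
  mul_one x := by
    refine Prod.ext (mul_one _) (Prod.ext ?_ (mul_one _))
    show x.1 • (0 : M) + MulOpposite.op (1 : D₁) • x.2.1 = x.2.1
    rw [smul_zero, MulOpposite.op_one, one_smul, zero_add]
  left_distrib x y z := by
    refine Prod.ext (mul_add _ _ _) (Prod.ext ?_ (mul_add _ _ _))
    show x.1 • (y.2.1 + z.2.1) + MulOpposite.op (y.2.2 + z.2.2) • x.2.1
        = x.1 • y.2.1 + MulOpposite.op y.2.2 • x.2.1 +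
            (x.1 • z.2.1 + MulOpposite.op z.2.2 • x.2.1)
    rw [smul_add, MulOpposite.op_add, add_smul]
    abel
  right_distrib x y z := by
    refine Prod.ext (add_mul _ _ _) (Prod.ext ?_ (add_mul _ _ _))
    show (x.1 + y.1) • z.2.1 + MulOpposite.op z.2.2 • (x.2.1 + y.2.1)
        = x.1 • z.2.1 + MulOpposite.op z.2.2 • x.2.1 +
            (y.1 • z.2.1 + MulOpposite.op z.2.2 • y.2.1)
    rw [add_smul, smul_add]
    abel
  zero_mul x := by
    refine Prod.ext (zero_mul _) (Prod.ext ?_ (zero_mul _))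
    show (0 : D₀) • x.2.1 + MulOpposite.op x.2.2 • (0 : M) = 0
    rw [zero_smul, smul_zero, add_zero]
  mul_zero x := by
    refine Prod.ext (mul_zero _) (Prod.ext ?_ (mul_zero _))
    show x.1 • (0 : M) + MulOpposite.op (0 : D₁) • x.2.1 = 0
    rw [smul_zero, MulOpposite.op_zero, zero_smul, add_zero]

@[simp] lemma mul_def (x y : Species D₀ D₁ M) :
    x * y = (x.1 * y.1, x.1 • y.2.1 + MulOpposite.op y.2.2 • x.2.1, x.2.2 * y.2.2) := rfl

@[simp] lemma one_def : (1 : Species D₀ D₁ M) = (1, 0, 1) := rfl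

/-- The idempotent `e₀`. -/
def e0 : Species D₀ D₁ M := (1, 0, 0)

/-- The idempotent `e₁`. -/
def e1 : Species D₀ D₁ M := (0, 0, 1)

end Species

end Species

section Statement5

variable (D₀ D₁ : Type) [DivisionRing D₀] [DivisionRing D₁]
variable (M : Type) [AddCommGroup M] [Module D₀ M] [Module D₁ᵐᵒᵖ M]
  [SMulCommClass D₀ D₁ᵐᵒᵖ M]

/-- The right `A_M`-module `(M*  D₁)`: the carrier is `M* × D₁` and
`(δ, b) • (α, m; 0, β) = (δα, δ(m) + bβ)`, where `(δα)(x) = δ(αx)`. -/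
def InjRight (D₀ D₁ : Type) [DivisionRing D₁] (M : Type) [AddCommGroup M]
    [Module D₁ᵐᵒᵖ M] : Type := RightDual D₁ M × D₁

instance : AddCommGroup (InjRight D₀ D₁ M) :=
  inferInstanceAs (AddCommGroup (RightDual D₁ M × D₁))

noncomputable instance : Module (Species D₀ D₁ M)ᵐᵒᵖ (InjRight D₀ D₁ M) where
  smul y p := (MulOpposite.op y.unop.1 • p.1, p.1 y.unop.2.1 + p.2 * y.unop.2.2)
  one_smul p := by
    refine Prod.ext ?_ ?_
    · show MulOpposite.op (1 : D₀) • p.1 = p.1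
      apply LinearMap.ext; intro z
      show p.1 ((1 : D₀) • z) = p.1 z
      rw [one_smul]
    · show p.1 (0 : M) + p.2 * 1 = p.2
      rw [map_zero, mul_one, zero_add]
  mul_smul x y p := by
    refine Prod.ext ?_ ?_
    · apply LinearMap.ext; intro z
      show p.1 ((y.unop.1 * x.unop.1) • z) = p.1 (y.unop.1 • x.unop.1 • z)
      rw [mul_smul]
    · show p.1 (y.unop.1 • x.unop.2.1 + MulOpposite.op x.unop.2.2 • y.unop.2.1)
          + p.2 * (y.unop.2.2 * x.unop.2.2)
        = p.1 (y.unop.1 • x.unop.2.1) + (p.1 y.unop.2.1 + p.2 * y.unop.2.2) * x.unop.2.2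
      rw [map_add, LinearMap.map_smul, MulOpposite.smul_eq_mul_unop, MulOpposite.unop_op,
        add_mul, mul_assoc, add_assoc]
  smul_zero y := by
    refine Prod.ext ?_ ?_
    · apply LinearMap.ext; intro z; rfl
    · show (0 : RightDual D₁ M) y.unop.2.1 + 0 * y.unop.2.2 = 0
      rw [LinearMap.zero_apply, zero_mul, add_zero]
  smul_add y p q := by
    refine Prod.ext ?_ ?_
    · apply LinearMap.ext; intro z; rfl
    · show (p.1 + q.1) y.unop.2.1 + (p.2 + q.2) * y.unop.2.2
        = p.1 y.unop.2.1 + p.2 * y.unop.2.2 + (q.1 y.unop.2.1 + q.2 * y.unop.2.2)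
      rw [LinearMap.add_apply, add_mul]
      abel
  add_smul x y p := by
    refine Prod.ext ?_ ?_
    · apply LinearMap.ext; intro z
      show p.1 ((x.unop.1 + y.unop.1) • z) = p.1 (x.unop.1 • z) + p.1 (y.unop.1 • z)
      rw [add_smul, map_add]
    · show p.1 (x.unop.2.1 + y.unop.2.1) + p.2 * (x.unop.2.2 + y.unop.2.2)
        = p.1 x.unop.2.1 + p.2 * x.unop.2.2 + (p.1 y.unop.2.1 + p.2 * y.unop.2.2)
      rw [map_add, mul_add]
      abel
  zero_smul p := by
    refine Prod.ext ?_ ?_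
    · apply LinearMap.ext; intro z
      show p.1 ((0 : D₀) • z) = 0
      rw [zero_smul, map_zero]
    · show p.1 (0 : M) + p.2 * 0 = 0
      rw [map_zero, mul_zero, add_zero]

namespace Species

open MulOpposite

variable {D₀ D₁ M}

def ofM (m : M) : Species D₀ D₁ M := (0, m, 0)

def ofD₁ (b : D₁) : Species D₀ D₁ M := (0, 0, b)

@[simp] lemma ofM_add (m m' : M) : (ofM (m + m') : Species D₀ D₁ M) = ofM m + ofM m' := by
  simp [ofM]

@[simp] lemma ofD₁_one : (ofD₁ 1 : Species D₀ D₁ M) = e1 D₀ D₁ M := rfl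

@[simp] lemma ofD₁_mul_ofD₁ (b c : D₁) :
    (ofD₁ b * ofD₁ c : Species D₀ D₁ M) = ofD₁ (b * c) := by
  simp [ofD₁]

@[simp] lemma ofD₁_add (b c : D₁) : (ofD₁ (b + c) : Species D₀ D₁ M) = ofD₁ b + ofD₁ c := by
  simp [ofD₁]

@[simp] lemma ofD₁_zero : (ofD₁ 0 : Species D₀ D₁ M) = 0 := rfl

@[simp] lemma ofD₁_mul_e1 (b : D₁) : (ofD₁ b * e1 D₀ D₁ M : Species D₀ D₁ M) = ofD₁ b := by
  simp [ofD₁, e1]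

@[simp] lemma e1_mul_ofD₁ (b : D₁) : (e1 D₀ D₁ M * ofD₁ b : Species D₀ D₁ M) = ofD₁ b := by
  simp [ofD₁, e1]

@[simp] lemma e1_mul_e1 : e1 D₀ D₁ M * e1 D₀ D₁ M = e1 D₀ D₁ M := by
  simp [e1]

@[simp] lemma ofM_mul_e1 (m : M) : (ofM m * e1 D₀ D₁ M : Species D₀ D₁ M) = ofM m := by
  simp [ofM, e1]

@[simp] lemma ofM_mul_ofD₁ (m : M) (b : D₁) :
    (ofM m * ofD₁ b : Species D₀ D₁ M) = ofM (op b • m) := by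
  simp [ofM, ofD₁]

@[simp] lemma mul_ofM (a : Species D₀ D₁ M) (m : M) : a * ofM m = ofM (a.1 • m) := by
  simp [ofM]

lemma mul_e1 (a : Species D₀ D₁ M) : a * e1 D₀ D₁ M = ofM a.2.1 + ofD₁ a.2.2 := by
  simp [ofM, ofD₁, e1]

variable {Z : Type} [AddCommGroup Z] [Module (Species D₀ D₁ M)ᵐᵒᵖ Z]

variable (D₀ D₁ M Z) in
def e1Part : AddSubgroup Z where
  carrier := {z | op (e1 D₀ D₁ M) • z = z}
  add_mem' ha hb := by simp_all [smul_add]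
  zero_mem' := smul_zero _
  neg_mem' ha := by simp_all [smul_neg]

lemma smul_mem_e1Part {a : Species D₀ D₁ M} (ha : a * e1 D₀ D₁ M = a) (z : Z) :
    op a • z ∈ e1Part D₀ D₁ M Z := by
  change op (e1 D₀ D₁ M) • op a • z = op a • z
  rw [← mul_smul, ← op_mul, ha]

instance : SMul D₁ᵐᵒᵖ (e1Part D₀ D₁ M Z) where
  smul b z := ⟨op (ofD₁ b.unop) • (z : Z), by
    rw [← z.2, ← mul_smul, ← op_mul, e1_mul_ofD₁]; exact smul_mem_e1Part (ofD₁_mul_e1 _) _⟩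

@[simp] lemma coe_e1Part_smul (b : D₁ᵐᵒᵖ) (z : e1Part D₀ D₁ M Z) :
    ((b • z : e1Part D₀ D₁ M Z) : Z) = op (ofD₁ b.unop : Species D₀ D₁ M) • (z : Z) := rfl

instance : Module D₁ᵐᵒᵖ (e1Part D₀ D₁ M Z) where
  one_smul z := Subtype.ext (by rw [coe_e1Part_smul, unop_one, ofD₁_one]; exact z.2)
  mul_smul b c z := Subtype.ext (by
    simp only [coe_e1Part_smul, ← mul_smul, ← op_mul, unop_mul, ofD₁_mul_ofD₁])
  smul_zero b := Subtype.ext (smul_zero _)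
  smul_add b z w := Subtype.ext (smul_add _ _ _)
  add_smul b c z := Subtype.ext (by
    simp only [coe_e1Part_smul, unop_add, ofD₁_add, op_add, add_smul, AddSubgroup.coe_add])
  zero_smul z := Subtype.ext (by
    simp only [coe_e1Part_smul, unop_zero, ofD₁_zero, op_zero, zero_smul, ZeroMemClass.coe_zero])

variable {X Y : Type} [AddCommGroup X] [Module (Species D₀ D₁ M)ᵐᵒᵖ X]
  [AddCommGroup Y] [Module (Species D₀ D₁ M)ᵐᵒᵖ Y]

def e1PartMap (f : X →ₗ[(Species D₀ D₁ M)ᵐᵒᵖ] Y) :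
    e1Part D₀ D₁ M X →ₗ[D₁ᵐᵒᵖ] e1Part D₀ D₁ M Y where
  toFun x := ⟨f x, by
    change op (e1 D₀ D₁ M) • f x = f x
    rw [← map_smul, x.2]⟩
  map_add' x y := Subtype.ext (map_add f _ _)
  map_smul' b x := Subtype.ext (map_smul f _ _)

lemma e1PartMap_injective {f : X →ₗ[(Species D₀ D₁ M)ᵐᵒᵖ] Y} (hf : Function.Injective f) :
    Function.Injective (e1PartMap f) :=
  fun _ _ h ↦ Subtype.ext (hf (congrArg Subtype.val h))

end Species

namespace InjRight

open MulOpposite Species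

variable {D₀ D₁ M}

@[simp] lemma smul_snd (a : (Species D₀ D₁ M)ᵐᵒᵖ) (p : InjRight D₀ D₁ M) :
    (a • p).2 = p.1 a.unop.2.1 + p.2 * a.unop.2.2 := rfl

variable {Z : Type} [AddCommGroup Z] [Module (Species D₀ D₁ M)ᵐᵒᵖ Z]

noncomputable def toE1Dual (g : Z →ₗ[(Species D₀ D₁ M)ᵐᵒᵖ] InjRight D₀ D₁ M) :
    e1Part D₀ D₁ M Z →ₗ[D₁ᵐᵒᵖ] D₁ where
  toFun z := (g z).2
  map_add' z w := congrArg Prod.snd (map_add g (z : Z) w)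
  map_smul' b z := by simp [ofD₁]

def liftFst (γ : e1Part D₀ D₁ M Z →ₗ[D₁ᵐᵒᵖ] D₁) (z : Z) : RightDual D₁ M where
  toFun m := γ ⟨op (ofM m) • z, smul_mem_e1Part (ofM_mul_e1 m) z⟩
  map_add' m m' := by
    rw [← map_add]; congr 1; ext; simp only [ofM_add, op_add, add_smul]; rfl
  map_smul' b m := by
    rw [← map_smul]; congr 1; ext
    simp only [coe_e1Part_smul, ← mul_smul, ← op_mul, ofM_mul_ofD₁, op_unop, RingHom.id_apply]

def lift (γ : e1Part D₀ D₁ M Z →ₗ[D₁ᵐᵒᵖ] D₁) :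
    Z →ₗ[(Species D₀ D₁ M)ᵐᵒᵖ] InjRight D₀ D₁ M where
  toFun z := (liftFst γ z, γ ⟨op (e1 D₀ D₁ M) • z, smul_mem_e1Part e1_mul_e1 z⟩)
  map_add' z w := by
    refine Prod.ext (LinearMap.ext fun m ↦ ?_) ?_ <;>
    · show γ _ = γ _ + γ _
      rw [← map_add]; congr 1; ext; exact smul_add _ _ _
  map_smul' a z := by
    induction a using MulOpposite.rec' with | _ a
    refine Prod.ext (LinearMap.ext fun m ↦ ?_) ?_
    · show γ _ = γ ⟨op (ofM (a.1 • m)) • z, smul_mem_e1Part (ofM_mul_e1 _) z⟩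
      congr 1; ext
      simp only [← mul_smul, ← op_mul, mul_ofM]
    · have h : (⟨op (e1 D₀ D₁ M) • op a • z, smul_mem_e1Part e1_mul_e1 _⟩ : e1Part D₀ D₁ M Z) =
          ⟨op (ofM a.2.1) • z, smul_mem_e1Part (ofM_mul_e1 _) z⟩ +
            op a.2.2 • ⟨op (e1 D₀ D₁ M) • z, smul_mem_e1Part e1_mul_e1 z⟩ := by
        ext
        simp only [AddSubgroup.coe_add, coe_e1Part_smul, ← mul_smul, ← op_mul, mul_e1,
          unop_op, e1_mul_ofD₁, op_add, add_smul]
      show γ _ = liftFst γ z a.2.1 + γ _ * a.2.2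
      rw [h, map_add, map_smul, op_smul_eq_mul]
      rfl

lemma lift_toE1Dual (g : Z →ₗ[(Species D₀ D₁ M)ᵐᵒᵖ] InjRight D₀ D₁ M) :
    lift (toE1Dual g) = g := by
  ext z : 1
  refine Prod.ext (LinearMap.ext fun m ↦ ?_) ?_
  · show (g (op (ofM m) • z)).2 = (g z).1 m
    simp [ofM]
  · show (g (op (e1 D₀ D₁ M) • z)).2 = (g z).2
    simp [e1]

lemma lift_comp {X : Type} [AddCommGroup X] [Module (Species D₀ D₁ M)ᵐᵒᵖ X]
    (γ : e1Part D₀ D₁ M Z →ₗ[D₁ᵐᵒᵖ] D₁) (f : X →ₗ[(Species D₀ D₁ M)ᵐᵒᵖ] Z) :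
    (lift γ).comp f = lift (γ.comp (e1PartMap f)) := by
  ext x : 1
  refine Prod.ext (LinearMap.ext fun m ↦ ?_) ?_ <;>
  · show γ _ = γ _
    congr 1; ext; exact (map_smul f _ _).symm

end InjRight

theorem statement5 :
    Module.Injective (Species D₀ D₁ M)ᵐᵒᵖ (InjRight D₀ D₁ M) := by
  refine ⟨fun X Y _ _ _ _ f hf g ↦ ?_⟩
  obtain ⟨r, hr⟩ := (Species.e1PartMap f).exists_leftInverse_of_injective
    (LinearMap.ker_eq_bot.mpr (Species.e1PartMap_injective hf))
  refine ⟨InjRight.lift ((InjRight.toE1Dual g).comp r), fun x ↦ ?_⟩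
  rw [← LinearMap.comp_apply, InjRight.lift_comp, LinearMap.comp_assoc, hr, LinearMap.comp_id,
    InjRight.lift_toE1Dual]

end Statement5
end

section
/- Let M be a D₀–D₁-bimodule with symmetric duals and let DA_M be the A_M-bimodule whose underlying group is (D₀, 0; M*, D₁), with left action (α, m; 0, β)·(a, 0; δ, b) = (αa + m(δ), 0; βδ, βb) (using a fixed identification M ≅ M**) and right action (a, 0; δ, b)·(α, m; 0, β) = (aα, 0; δα, δ(m) + bβ). Then DA_M is the injective hull of the semisimple right A_M-module (D₀ 0) ⊕ (0 D₁), the natural map A_M → End_{A_M}((DA_M)_{A_M}) is a ring isomorphism, DA_M contains all simple right A_M-modules, and hence ω = (DA_M)[-1] is a canonical complex for A_M. -/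
set_option linter.unusedSectionVars false

section Statement6


variable (D₀ D₁ : Type) [DivisionRing D₀] [DivisionRing D₁]
variable (M : Type) [AddCommGroup M] [Module D₀ M] [Module D₁ᵐᵒᵖ M]
  [SMulCommClass D₀ D₁ᵐᵒᵖ M]

/-- The simple injective right `A_M`-module `(D₀ 0)`: the carrier is `D₀` and
`a • (α, m; 0, β) = aα`. -/
abbrev E0Simple (D₀ D₁ M : Type) : Type := D₀

/-- Projection of the triangular matrix ring onto its upper diagonal entry. -/
def projA : Species D₀ D₁ M →+* D₀ where
  toFun x := x.1
  map_one' := rfl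
  map_mul' _ _ := rfl
  map_zero' := rfl
  map_add' _ _ := rfl

noncomputable instance : Module (Species D₀ D₁ M)ᵐᵒᵖ (E0Simple D₀ D₁ M) :=
  Module.compHom D₀ (RingHom.op (projA D₀ D₁ M))

/-- The simple right `A_M`-module `(0 D₁)`. -/
abbrev SimpleRight (D₀ D₁ M : Type) : Type := D₁

/-- Projection of the triangular matrix ring onto its lower diagonal entry. -/
def projB : Species D₀ D₁ M →+* D₁ where
  toFun x := x.2.2
  map_one' := rfl
  map_mul' _ _ := rfl
  map_zero' := rfl
  map_add' _ _ := rfl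

noncomputable instance : Module (Species D₀ D₁ M)ᵐᵒᵖ (SimpleRight D₀ D₁ M) :=
  Module.compHom D₁ (RingHom.op (projB D₀ D₁ M))

/-- The `A_M`-bimodule `DA_M`, as a right `A_M`-module: the carrier is
`(D₀, 0; M*, D₁) = D₀ × M* × D₁` and the right action is
`(a, 0; δ, b) • (α, m; 0, β) = (aα, 0; δα, δ(m) + bβ)`; as a right module it is
the direct sum `(D₀ 0) ⊕ (M* D₁)`. -/
abbrev DAmod (D₀ D₁ : Type) [DivisionRing D₀] [DivisionRing D₁] (M : Type)
    [AddCommGroup M] [Module D₀ M] [Module D₁ᵐᵒᵖ M] [SMulCommClass D₀ D₁ᵐᵒᵖ M] :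
    Type :=
  E0Simple D₀ D₁ M × InjRight D₀ D₁ M

/-- The socle `(D₀ 0) ⊕ (0 D₁)` of `DA_M`, as a submodule. -/
noncomputable def socDA : Submodule (Species D₀ D₁ M)ᵐᵒᵖ (DAmod D₀ D₁ M) where
  carrier := {p | p.2.1 = 0}
  add_mem' := by
    rintro p q (hp : p.2.1 = 0) (hq : q.2.1 = 0)
    show p.2.1 + q.2.1 = 0
    rw [hp, hq, add_zero]
  zero_mem' := rfl
  smul_mem' := by
    rintro y p (hp : p.2.1 = 0)
    show MulOpposite.op y.unop.1 • p.2.1 = 0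
    rw [hp, smul_zero]


/-!
As a right `A_M`-module, `DA_M = (D₀ 0) ⊕ (M* D₁)`, and both summands satisfy Baer's criterion.
An element `x` of a right ideal `I` splits as `x e₀ + x e₁`: the part `x e₀` is zero or a multiple
of `e₀ ∈ I`, and `x e₁` lies in the second column `(0, M; 0, D₁)`. For `(M* D₁)`, the values of a
map `I → (M* D₁)` on the column part of `I` form a `D₁`-linear functional on a subspace of `M ⊕ D₁`;
it extends to all of `M ⊕ D₁`, where it is the action of some `(δ, d)`.

An element of `(M* D₁)` is determined by the action of the second column on it,
`(δ, b) (0, m; 0, β) = (0, δ m + b β)`. This makes the socle `δ = 0` essential, and shows that an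
endomorphism of `DA_M` is determined by its values at `(1, 0, 0)` (an element of `D₀`), at
`(0, 0, 1)` (an element of `D₁`) and along `(0, M*, 0)` (a functional on `M*`, i.e. an element of
`M** ≅ M`).

A simple module is either killed by `e₁`, and is then a copy of `(D₀ 0)`, or it is a copy of
`(0 D₁)`; both lie in the socle.
-/

universe u v in
instance Module.Injective.prod (R : Type u) [Ring R] [Small.{v} R] (M N : Type v)
    [AddCommGroup M] [AddCommGroup N] [Module R M] [Module R N]
    [Module.Injective R M] [Module.Injective R N] : Module.Injective R (M × N) :=
  ⟨fun X Y _ _ _ _ f hf g ↦ by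
    obtain ⟨l₁, hl₁⟩ := Injective.extension_property R M X Y f hf (LinearMap.fst R M N ∘ₗ g)
    obtain ⟨l₂, hl₂⟩ := Injective.extension_property R N X Y f hf (LinearMap.snd R M N ∘ₗ g)
    exact ⟨l₁.prod l₂, fun x ↦ Prod.ext (LinearMap.congr_fun hl₁ x) (LinearMap.congr_fun hl₂ x)⟩⟩

open MulOpposite in
lemma Ideal.op_mul_mem {R : Type*} [Ring R] (I : Ideal Rᵐᵒᵖ) {y : R} (hy : op y ∈ I)
    (z : R) : op (y * z) ∈ I :=
  I.mul_mem_left (op z) hy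

open MulOpposite in
lemma LinearMap.apply_op_of_eq_mul {R Q : Type*} [Ring R] [AddCommGroup Q] [Module Rᵐᵒᵖ Q]
    {I : Ideal Rᵐᵒᵖ} (g : I →ₗ[Rᵐᵒᵖ] Q) {x y z : R} (h : x = y * z) (hx : op x ∈ I)
    (hy : op y ∈ I) : g ⟨op x, hx⟩ = op z • g ⟨op y, hy⟩ := by
  subst h
  exact map_smul g (op z) ⟨op y, hy⟩

section

open MulOpposite

variable {D₀ D₁ M}

local notation "A" => Species D₀ D₁ M
local notation "DA" => DAmod D₀ D₁ M

namespace Species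

lemma mul_e0 (x : A) : x * e0 D₀ D₁ M = (x.1, 0) := by
  ext <;> simp [e0]

lemma mul_e1_s6 (x : A) : x * e1 D₀ D₁ M = (0, x.2) := by
  ext <;> simp [e1]

lemma e0_mul (x : A) : e0 D₀ D₁ M * x = (x.1, x.2.1, 0) := by
  simp [e0]

theorem exists_extension_of_eq_smul_on_e0_and_column {Q : Type} [AddCommGroup Q]
    [Module Aᵐᵒᵖ Q] {I : Ideal Aᵐᵒᵖ} (g : I →ₗ[Aᵐᵒᵖ] Q) (q : Q)
    (he₀ : ∀ h : op (e0 D₀ D₁ M) ∈ I, g ⟨_, h⟩ = op (e0 D₀ D₁ M) • q)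
    (hcol : ∀ (v : M × D₁) (h : op ((0, v) : A) ∈ I), g ⟨_, h⟩ = op ((0, v) : A) • q) :
    ∃ g' : Aᵐᵒᵖ →ₗ[Aᵐᵒᵖ] Q, ∀ x (hx : x ∈ I), g' x = g ⟨x, hx⟩ := by
  refine ⟨LinearMap.toSpanSingleton _ _ q, fun x hx ↦ ?_⟩
  obtain ⟨y, rfl⟩ : ∃ y : A, op y = x := ⟨unop x, op_unop x⟩
  have hdiag_mem : op ((y.1, 0) : A) ∈ I := mul_e0 y ▸ I.op_mul_mem hx (e0 D₀ D₁ M)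
  have hcol_mem : op ((0, y.2) : A) ∈ I := mul_e1_s6 y ▸ I.op_mul_mem hx (e1 D₀ D₁ M)
  -- the diagonal part `y e₀` is either zero or generates `e₀`
  have hdiag : g ⟨_, hdiag_mem⟩ = op ((y.1, 0) : A) • q := by
    by_cases hy : y.1 = 0
    · simp only [hy]
      exact (map_zero g).trans (zero_smul _ q).symm
    · have he : op (e0 D₀ D₁ M) ∈ I := by
        have : y * (y.1⁻¹, 0) = e0 D₀ D₁ M := by ext <;> simp [e0, mul_inv_cancel₀ hy]
        exact this ▸ I.op_mul_mem hx (y.1⁻¹, 0)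
      have hdiag_eq : ((y.1, 0) : A) = e0 D₀ D₁ M * (y.1, 0) := by ext <;> simp [e0]
      rw [g.apply_op_of_eq_mul hdiag_eq _ he, he₀ he, smul_smul, ← op_mul, ← hdiag_eq]
  have hsplit : (⟨op y, hx⟩ : I) = ⟨_, hdiag_mem⟩ + ⟨_, hcol_mem⟩ :=
    Subtype.ext (congrArg op (by ext <;> simp))
  rw [LinearMap.toSpanSingleton_apply, hsplit, map_add, hdiag, hcol, ← add_smul, ← op_add]
  congr 2
  ext <;> simp

end Species

open Species

@[simp] lemma E0Simple.op_smul (x : A) (a : E0Simple D₀ D₁ M) : op x • a = a * x.1 := rfl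

@[simp] lemma SimpleRight.op_smul (x : A) (d : SimpleRight D₀ D₁ M) : op x • d = d * x.2.2 :=
  rfl

@[simp] lemma InjRight.op_smul (x : A) (p : InjRight D₀ D₁ M) :
    op x • p = (op x.1 • p.1, p.1 x.2.1 + p.2 * x.2.2) := rfl

@[ext] lemma InjRight.ext {p q : InjRight D₀ D₁ M} (h₁ : p.1 = q.1) (h₂ : p.2 = q.2) : p = q :=
  Prod.ext h₁ h₂

@[simp] lemma InjRight.snd_zero : (0 : InjRight D₀ D₁ M).2 = 0 := rfl

lemma InjRight.ext_of_op_smul_column {p p' : InjRight D₀ D₁ M}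
    (h : ∀ v : M × D₁, op ((0, v) : A) • p = op ((0, v) : A) • p') : p = p' := by
  have h₂ : p.2 = p'.2 := by simpa using congrArg Prod.snd (h (0, 1))
  refine Prod.ext (LinearMap.ext fun m ↦ ?_) h₂
  simpa using congrArg Prod.snd (h (m, 0))

instance : Module.Injective Aᵐᵒᵖ (E0Simple D₀ D₁ M) := Module.Baer.injective fun I g ↦ by
  have hcol (v : M × D₁) (h : op ((0, v) : A) ∈ I) : g ⟨_, h⟩ = 0 := by
    rw [g.apply_op_of_eq_mul (mul_e1_s6 (0, v)).symm h h]
    simp [e1]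
  obtain ⟨q, hq⟩ : ∃ q : E0Simple D₀ D₁ M,
      ∀ h : op (e0 D₀ D₁ M) ∈ I, g ⟨_, h⟩ = op (e0 D₀ D₁ M) • q := by
    by_cases he : op (e0 D₀ D₁ M) ∈ I
    · exact ⟨g ⟨_, he⟩, fun _ ↦ by simp [e0]⟩
    · exact ⟨0, fun h ↦ absurd h he⟩
  exact exists_extension_of_eq_smul_on_e0_and_column g q hq fun v h ↦ by simp [hcol]

lemma Species.column_smul (c : D₁ᵐᵒᵖ) (v : M × D₁) :
    ((0, c • v) : A) = (0, v) * (0, 0, c.unop) := by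
  ext <;> simp [MulOpposite.smul_eq_mul_unop]

def Species.lowerColumn (I : Ideal Aᵐᵒᵖ) : Submodule D₁ᵐᵒᵖ (M × D₁) where
  carrier := {v | op ((0, v) : A) ∈ I}
  add_mem' {v w} hv hw := by
    have : ((0, v + w) : A) = (0, v) + (0, w) := by simp
    show op ((0, v + w) : A) ∈ I
    rw [this, op_add]
    exact I.add_mem hv hw
  zero_mem' := I.zero_mem
  smul_mem' c v hv := by
    show op ((0, c • v) : A) ∈ I
    rw [column_smul]
    exact I.op_mul_mem hv (0, 0, c.unop)

lemma Species.mem_lowerColumn {I : Ideal Aᵐᵒᵖ} {v : M × D₁} :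
    v ∈ lowerColumn I ↔ op ((0, v) : A) ∈ I :=
  Iff.rfl

noncomputable def InjRight.columnFunctional {I : Ideal Aᵐᵒᵖ}
    (g : I →ₗ[Aᵐᵒᵖ] InjRight D₀ D₁ M) : lowerColumn I →ₗ[D₁ᵐᵒᵖ] D₁ where
  toFun v := (g ⟨_, mem_lowerColumn.1 v.2⟩).2
  map_add' v w := by
    have : (⟨_, (v + w).2⟩ : I) = ⟨_, v.2⟩ + ⟨_, w.2⟩ := Subtype.ext (congrArg op (by simp))
    show (g ⟨_, mem_lowerColumn.1 (v + w).2⟩).2 = _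
    rw [this, map_add]
    rfl
  map_smul' c v := by
    have := g.apply_op_of_eq_mul (column_smul c v.1) (mem_lowerColumn.1 (c • v).2)
      (mem_lowerColumn.1 v.2)
    exact (congrArg Prod.snd this).trans (by simp)

instance : Module.Injective Aᵐᵒᵖ (InjRight D₀ D₁ M) := Module.Baer.injective fun I g ↦ by
  obtain ⟨γ, hγ⟩ := LinearMap.exists_extend (InjRight.columnFunctional g)
  -- the extended functional is `(m, b) ↦ δ m + d b`, i.e. the action of `(δ, d)` on the column
  let q : InjRight D₀ D₁ M := (γ ∘ₗ LinearMap.inl D₁ᵐᵒᵖ M D₁, γ (0, 1))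
  have hq (v : M × D₁) : op ((0, v) : A) • q = (0, γ v) := by
    have hv : v = (v.1, 0) + op v.2 • (0, 1) := by ext <;> simp
    conv_rhs => rw [hv, map_add, map_smul]
    rw [InjRight.op_smul]
    ext1 <;> simp [q, MulOpposite.smul_eq_mul_unop]
  have hcol (v : M × D₁) (h : op ((0, v) : A) ∈ I) : g ⟨_, h⟩ = op ((0, v) : A) • q := by
    rw [hq, g.apply_op_of_eq_mul (mul_e1_s6 (0, v)).symm h h]
    have hγv : γ v = (g ⟨_, h⟩).2 := LinearMap.congr_fun hγ ⟨v, h⟩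
    ext1 <;> simp [e1, hγv]
  refine exists_extension_of_eq_smul_on_e0_and_column g q (fun he ↦ ?_) hcol
  refine InjRight.ext_of_op_smul_column fun v ↦ ?_
  have hmem : op ((0, v.1, 0) : A) ∈ I := by
    simpa only [e0_mul] using I.op_mul_mem he ((0, v) : A)
  rw [← g.apply_op_of_eq_mul (e0_mul (0, v)).symm hmem he, hcol _ hmem, smul_smul, ← op_mul,
    e0_mul]

def DAmod.mk (a : D₀) (δ : RightDual D₁ M) (b : D₁) : DA := (a, δ, b)

namespace DAmod

section Coordinates

variable (a a' : D₀) (δ δ' : RightDual D₁ M) (b b' : D₁)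

@[simp] lemma mk_fst : (mk a δ b).1 = a := rfl
@[simp] lemma mk_snd_fst : (mk a δ b).2.1 = δ := rfl
@[simp] lemma mk_snd_snd : (mk a δ b).2.2 = b := rfl

@[simp] lemma mk_add_mk : mk a δ b + mk a' δ' b' = mk (a + a') (δ + δ') (b + b') := rfl

@[simp] lemma mk_zero : mk (0 : D₀) (0 : RightDual D₁ M) (0 : D₁) = 0 := rfl

end Coordinates

@[simp] lemma mk_eta (p : DA) : mk p.1 p.2.1 p.2.2 = p := rfl

lemma ext_mk {p q : DA} (h₁ : p.1 = q.1) (h₂ : p.2.1 = q.2.1) (h₃ : p.2.2 = q.2.2) : p = q :=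
  Prod.ext h₁ (InjRight.ext h₂ h₃)

@[simp] lemma op_smul (x : A) (p : DA) :
    op x • p = mk (p.1 * x.1) (op x.1 • p.2.1) (p.2.1 x.2.1 + p.2.2 * x.2.2) :=
  rfl

lemma op_smul_column (v : M × D₁) (p : DA) :
    op ((0, v) : A) • p = mk 0 0 (p.2.1 v.1 + p.2.2 * v.2) := by
  simp

lemma ext_of_op_smul_column {p p' : DA} (h₁ : p.1 = p'.1)
    (h : ∀ v : M × D₁, op ((0, v) : A) • p = op ((0, v) : A) • p') : p = p' :=
  Prod.ext h₁ (InjRight.ext_of_op_smul_column fun v ↦ congrArg Prod.snd (h v))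

end DAmod

section Socle

noncomputable def socDAEquiv :
    socDA D₀ D₁ M ≃ₗ[Aᵐᵒᵖ] E0Simple D₀ D₁ M × SimpleRight D₀ D₁ M where
  toFun p := (p.1.1, p.1.2.2)
  invFun a := ⟨DAmod.mk a.1 0 a.2, rfl⟩
  map_add' _ _ := rfl
  map_smul' r p := by
    have hp : (p : DA).2.1 = 0 := p.2
    obtain ⟨y, rfl⟩ : ∃ y : A, op y = r := ⟨unop r, op_unop r⟩
    ext <;> simp [hp]
  left_inv p := Subtype.ext (DAmod.ext_mk rfl p.2.symm rfl)
  right_inv _ := rfl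

theorem socDA_essential (K : Submodule Aᵐᵒᵖ DA) (hK : K ⊓ socDA D₀ D₁ M = ⊥) : K = ⊥ := by
  have hsoc (q : DA) (hqK : q ∈ K) (hq : q.2.1 = 0) : q = 0 :=
    (Submodule.eq_bot_iff _).1 hK q ⟨hqK, hq⟩
  refine (Submodule.eq_bot_iff K).2 fun p hp ↦ hsoc p hp (LinearMap.ext fun m ↦ ?_)
  have := hsoc _ (K.smul_mem (op ((0, m, 0) : A)) hp) (by simp)
  simpa using congrArg (·.2.2) this

end Socle

section Endomorphisms

open DAmod

variable (φ : DAmod D₀ D₁ M →ₗ[(Species D₀ D₁ M)ᵐᵒᵖ] DAmod D₀ D₁ M)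

lemma DAmod.map_mk_zero_zero (c : D₁) :
    φ (mk 0 0 c) = mk 0 0 ((φ (mk 0 0 1)).2.2 * c) := by
  have hc : (mk 0 0 c : DA) = op ((0, 0, c) : A) • mk 0 0 1 := by simp
  rw [hc, map_smul]
  simp

lemma DAmod.op_smul_column_map (p : DA) (v : M × D₁) :
    op ((0, v) : A) • φ p = mk 0 0 ((φ (mk 0 0 1)).2.2 * (p.2.1 v.1 + p.2.2 * v.2)) := by
  rw [← map_smul, op_smul_column, map_mk_zero_zero]

lemma DAmod.fst_map (p : DA) :
    (φ p).1 = (φ (mk 1 0 0)).1 * p.1 + (φ (mk 0 p.2.1 0)).1 := by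
  have hp : p = op ((p.1, 0) : A) • (mk 1 0 0 : DA) + mk 0 p.2.1 0 + mk 0 0 p.2.2 := by
    refine ext_mk ?_ ?_ ?_ <;> simp
  conv_lhs => rw [hp, map_add, map_add, map_smul, map_mk_zero_zero]
  simp

noncomputable def DAmod.midFunctional : RightDual D₀ (RightDual D₁ M) where
  toFun δ := (φ (mk 0 δ 0)).1
  map_add' δ δ' := by
    rw [← Prod.fst_add, ← map_add, mk_add_mk, add_zero, add_zero]
  map_smul' r δ := by
    have hδ : (mk 0 (r • δ) 0 : DA) = op ((r.unop, 0) : A) • mk 0 δ 0 := by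
      refine ext_mk ?_ ?_ ?_ <;> simp
    rw [hδ, map_smul]
    simp [MulOpposite.smul_eq_mul_unop]

end Endomorphisms

section LeftMultiplication

open DAmod

variable (e : M ≃ₗ[D₀] RightDual D₀ (RightDual D₁ M))

def IsLeftMul
    (lmul : Species D₀ D₁ M → (DAmod D₀ D₁ M →ₗ[(Species D₀ D₁ M)ᵐᵒᵖ] DAmod D₀ D₁ M)) : Prop :=
  ∀ y p, lmul y p = mk (y.1 * p.1 + e y.2.1 p.2.1) (y.2.2 • p.2.1) (y.2.2 * p.2.2)

noncomputable def DAmod.matrixOfEnd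
    (φ : DAmod D₀ D₁ M →ₗ[(Species D₀ D₁ M)ᵐᵒᵖ] DAmod D₀ D₁ M) : Species D₀ D₁ M :=
  ((φ (mk 1 0 0)).1, e.symm (midFunctional φ), (φ (mk 0 0 1)).2.2)

variable {e}
  {lmul : Species D₀ D₁ M → (DAmod D₀ D₁ M →ₗ[(Species D₀ D₁ M)ᵐᵒᵖ] DAmod D₀ D₁ M)}

namespace IsLeftMul

lemma apply (h : IsLeftMul e lmul) (y : A) (p : DA) :
    lmul y p = mk (y.1 * p.1 + e y.2.1 p.2.1) (y.2.2 • p.2.1) (y.2.2 * p.2.2) :=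
  h y p

lemma map_one (h : IsLeftMul e lmul) : lmul 1 = LinearMap.id :=
  LinearMap.ext fun p ↦ by simp [h.apply]

lemma map_add (h : IsLeftMul e lmul) (y y' : A) : lmul (y + y') = lmul y + lmul y' :=
  LinearMap.ext fun p ↦ by
    simp only [LinearMap.add_apply, h.apply, mk_add_mk]
    refine ext_mk ?_ (add_smul _ _ _) (add_mul _ _ _)
    simp only [mk_fst, Prod.fst_add, Prod.snd_add, add_mul]
    rw [_root_.map_add, LinearMap.add_apply]
    abel

lemma map_mul (h : IsLeftMul e lmul) (he : ∀ (b : D₁ᵐᵒᵖ) (x : M), e (b • x) = b • e x)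
    (y y' : A) : lmul (y * y') = lmul y ∘ₗ lmul y' :=
  LinearMap.ext fun p ↦ by
    simp [h.apply, he, mul_add, mul_assoc, mul_smul, add_assoc]

lemma leftInverse (h : IsLeftMul e lmul) : Function.LeftInverse (matrixOfEnd e) lmul := by
  intro y
  have hmid : midFunctional (lmul y) = e y.2.1 := LinearMap.ext fun δ ↦ by
    simp [midFunctional, h.apply]
  ext <;> simp [matrixOfEnd, h.apply, hmid]

lemma rightInverse (h : IsLeftMul e lmul) : Function.RightInverse (matrixOfEnd e) lmul := by
  intro φ
  refine LinearMap.ext fun p ↦ ext_of_op_smul_column ?_ fun v ↦ ?_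
  · rw [h.apply, fst_map φ p]
    simp [matrixOfEnd, midFunctional]
  · rw [op_smul_column_map, op_smul_column_map, h.apply]
    simp [matrixOfEnd]

lemma bijective (h : IsLeftMul e lmul) : Function.Bijective lmul :=
  ⟨h.leftInverse.injective, h.rightInverse.surjective⟩

end IsLeftMul

end LeftMultiplication

section SimpleModules

instance : IsSimpleModule Aᵐᵒᵖ (E0Simple D₀ D₁ M) :=
  isSimpleModule_iff_toSpanSingleton_surjective.2 ⟨inferInstanceAs (Nontrivial D₀),
    fun x hx y ↦ ⟨op ((x⁻¹ * y, 0) : A), by simp [mul_inv_cancel_left₀ hx]⟩⟩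

instance : IsSimpleModule Aᵐᵒᵖ (SimpleRight D₀ D₁ M) :=
  isSimpleModule_iff_toSpanSingleton_surjective.2 ⟨inferInstanceAs (Nontrivial D₁),
    fun x hx y ↦ ⟨op ((0, 0, x⁻¹ * y) : A), by simp [mul_inv_cancel_left₀ hx]⟩⟩

noncomputable def socDAInclusion : E0Simple D₀ D₁ M × SimpleRight D₀ D₁ M →ₗ[Aᵐᵒᵖ] DA :=
  (socDA D₀ D₁ M).subtype ∘ₗ socDAEquiv.symm.toLinearMap

lemma socDAInclusion_injective :
    Function.Injective (socDAInclusion (D₀ := D₀) (D₁ := D₁) (M := M)) :=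
  Subtype.val_injective.comp socDAEquiv.symm.injective

theorem Species.nonempty_linearEquiv_of_isSimpleModule (S : Type) [AddCommGroup S] [Module Aᵐᵒᵖ S]
    [IsSimpleModule Aᵐᵒᵖ S] :
    Nonempty (S ≃ₗ[Aᵐᵒᵖ] E0Simple D₀ D₁ M) ∨ Nonempty (S ≃ₗ[Aᵐᵒᵖ] SimpleRight D₀ D₁ M) := by
  by_cases h : ∃ t : S, op (e1 D₀ D₁ M) • t ≠ 0
  · obtain ⟨t, ht⟩ := h
    let g : SimpleRight D₀ D₁ M →ₗ[Aᵐᵒᵖ] S :=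
      { toFun d := op ((0, 0, d) : A) • t
        map_add' d d' := by
          rw [← add_smul, ← op_add]
          congr 2
          ext <;> simp
        map_smul' r d := by
          obtain ⟨y, rfl⟩ : ∃ y : A, op y = r := ⟨unop r, op_unop r⟩
          rw [RingHom.id_apply, smul_smul, ← op_mul]
          congr 2
          ext <;> simp }
    have hg : g ≠ 0 := fun h0 ↦ ht (by simpa [g, e1] using LinearMap.congr_fun h0 1)
    exact Or.inr ⟨(LinearEquiv.ofBijective g (LinearMap.bijective_of_ne_zero hg)).symm⟩
  · push Not at h
    have := IsSimpleModule.nontrivial Aᵐᵒᵖ S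
    obtain ⟨s, hs⟩ := exists_ne (0 : S)
    -- `e₁` kills `S`, so `A` acts on `s` through its upper corner
    have hfactor (x : A) : op x • s = op ((x.1, 0) : A) • s := by
      have hcol : op ((0, x.2) : A) • s = 0 := by
        rw [← mul_e1_s6 (0, x.2), op_mul, mul_smul]
        exact h _
      have hx : x = (x.1, 0) + (0, x.2) := by ext <;> simp
      rw [hx, op_add, add_smul, hcol, add_zero]
      simp
    let g : E0Simple D₀ D₁ M →ₗ[Aᵐᵒᵖ] S :=
      { toFun a := op ((a, 0) : A) • s
        map_add' a a' := by
          rw [← add_smul, ← op_add]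
          congr 2
          ext <;> simp
        map_smul' r a := by
          obtain ⟨y, rfl⟩ : ∃ y : A, op y = r := ⟨unop r, op_unop r⟩
          rw [RingHom.id_apply, smul_smul, ← op_mul, hfactor ((a, 0) * y)]
          simp }
    have hg : g ≠ 0 := fun h0 ↦ hs <| by
      rw [← one_smul Aᵐᵒᵖ s, ← op_one, hfactor]
      simpa [g] using LinearMap.congr_fun h0 1
    exact Or.inl ⟨(LinearEquiv.ofBijective g (LinearMap.bijective_of_ne_zero hg)).symm⟩

theorem DAmod.exists_injective_of_isSimpleModule (S : Type) [AddCommGroup S] [Module Aᵐᵒᵖ S]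
    [IsSimpleModule Aᵐᵒᵖ S] : ∃ f : S →ₗ[Aᵐᵒᵖ] DA, Function.Injective f := by
  rcases nonempty_linearEquiv_of_isSimpleModule (D₀ := D₀) (D₁ := D₁) (M := M) S with
    ⟨⟨σ⟩⟩ | ⟨⟨σ⟩⟩
  · exact ⟨socDAInclusion ∘ₗ LinearMap.inl _ _ _ ∘ₗ σ.toLinearMap,
      socDAInclusion_injective.comp (LinearMap.inl_injective.comp σ.injective)⟩
  · exact ⟨socDAInclusion ∘ₗ LinearMap.inr _ _ _ ∘ₗ σ.toLinearMap,
      socDAInclusion_injective.comp (LinearMap.inr_injective.comp σ.injective)⟩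

end SimpleModules

end

theorem statement6
    -- `M` has symmetric duals, via the fixed identification `e`:
    (e : M ≃ₗ[D₀] RightDual D₀ (RightDual D₁ M))
    (he : ∀ (b : D₁ᵐᵒᵖ) (x : M), e (b • x) = b • e x)
    -- the left `A_M`-action on `DA_M` (each `lmul y` is right `A_M`-linear):
    (lmul : Species D₀ D₁ M → (DAmod D₀ D₁ M →ₗ[(Species D₀ D₁ M)ᵐᵒᵖ] DAmod D₀ D₁ M))
    (hlmul : ∀ (y : Species D₀ D₁ M) (p : DAmod D₀ D₁ M),
      lmul y p = (y.1 * p.1 + e y.2.1 p.2.1, y.2.2 • p.2.1, y.2.2 * p.2.2)) :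
    -- `DA_M` is injective as a right module ...
    Module.Injective (Species D₀ D₁ M)ᵐᵒᵖ (DAmod D₀ D₁ M) ∧
    -- ... its socle is the semisimple module `(D₀ 0) ⊕ (0 D₁)` ...
    Nonempty ((socDA D₀ D₁ M) ≃ₗ[(Species D₀ D₁ M)ᵐᵒᵖ]
      (E0Simple D₀ D₁ M × SimpleRight D₀ D₁ M)) ∧
    -- ... of which `DA_M` is an essential extension (so `DA_M` is the injective
    -- hull of `(D₀ 0) ⊕ (0 D₁)`):
    (∀ K : Submodule (Species D₀ D₁ M)ᵐᵒᵖ (DAmod D₀ D₁ M),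
      K ⊓ socDA D₀ D₁ M = ⊥ → K = ⊥) ∧
    -- the natural map `A_M → End((DA_M)_{A_M})` is a ring isomorphism:
    (lmul 1 = LinearMap.id) ∧
    (∀ y y', lmul (y * y') = (lmul y).comp (lmul y')) ∧
    (∀ y y', lmul (y + y') = lmul y + lmul y') ∧
    Function.Bijective lmul ∧
    -- `DA_M` contains all simple right `A_M`-modules:
    (∀ (S : Type) [AddCommGroup S] [Module (Species D₀ D₁ M)ᵐᵒᵖ S],
      IsSimpleModule (Species D₀ D₁ M)ᵐᵒᵖ S →
        ∃ f : S →ₗ[(Species D₀ D₁ M)ᵐᵒᵖ] DAmod D₀ D₁ M, Function.Injective f) := by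
  have h : IsLeftMul e lmul := hlmul
  exact ⟨inferInstance, ⟨socDAEquiv⟩, socDA_essential, h.map_one, h.map_mul he, h.map_add,
    h.bijective, fun S _ _ _ ↦ DAmod.exists_injective_of_isSimpleModule S⟩

end Statement6
end
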